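/- Let L ⊂ ℂ be a lattice and {v, v'} a positively oriented basis with v' of minimal norm among all completions of v. Then the angle α between v and v' satisfies sin α ≥ area(L)/((|v|/2)² + (area(L)/|v|)²)^{1/2} / |v|, in particular sin α ≥ 2·area(L)/|v|² · (1 + O(1/|v|⁴)). -/

import Mathlib

noncomputable section

open Complex

/-- `{v, v'}` is a positively oriented ℤ-basis of the lattice `L ⊆ ℂ`. -/
def IsOrientedBasis (L : AddSubgroup ℂ) (v v' : ℂ) : Prop :=
  0 < (v' / v).im ∧ AddSubgroup.closure {v, v'} = L

/-- `v` is a primitive vector of `L`: it can be completed to a basis of `L`. -/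
def IsPrimitive (L : AddSubgroup ℂ) (v : ℂ) : Prop :=
  ∃ v', IsOrientedBasis L v v'

/-- `v'` has minimal norm among completions of `v` to a positively oriented basis of `L`. -/
def IsMinCompletion (L : AddSubgroup ℂ) (v v' : ℂ) : Prop :=
  IsOrientedBasis L v v' ∧ ∀ w, IsOrientedBasis L v w → ‖v'‖ ≤ ‖w‖

/-- The (signed) area of the parallelogram spanned by `v, v'`; it is positive
when `{v, v'}` is positively oriented, and equals `|v||v'| sin α`. -/
def pArea (v v' : ℂ) : ℝ := ((starRingEnd ℂ) v * v').im

/-! The area `Im(conj v · v')` of a positively oriented basis is the same for every basis of `L`: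
a change of basis between two of them has positive integral determinant in both directions.
Replacing `v'` by `v' + n v` gives another positively oriented completion of `v` with the same
area, and for `n = -round (Re (v' / v))` its component along `v` has length at most `|v| / 2`,
while its height over `v` is `area / |v|`. Minimality of `v'` therefore gives
`|v'|² ≤ (|v|/2)² + (area/|v|)²`, which is the bound on `sin α = area / (|v| |v'|)`. -/

lemma pArea_eq_re_mul_im (x y : ℂ) : pArea x y = x.re * y.im - x.im * y.re := by
  simp only [pArea, mul_im, conj_re, conj_im]
  ring

lemma pArea_zsmul_add_zsmul (a b c d : ℤ) (x y : ℂ) :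
    pArea (a • x + b • y) (c • x + d • y) = ((a * d - b * c : ℤ) : ℝ) * pArea x y := by
  simp only [pArea_eq_re_mul_im, zsmul_eq_mul, add_re, add_im, mul_re, mul_im, intCast_re,
    intCast_im]
  push_cast
  ring

lemma im_div_eq_pArea_div_normSq (x v : ℂ) : (x / v).im = pArea v x / normSq v := by
  rw [div_im, pArea_eq_re_mul_im]
  ring

lemma pArea_le_pArea_of_closure_le {v v' w w' : ℂ}
    (hle : AddSubgroup.closure {w, w'} ≤ AddSubgroup.closure ({v, v'} : Set ℂ))
    (hA : 0 ≤ pArea v v') (hB : 0 < pArea w w') : pArea v v' ≤ pArea w w' := by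
  obtain ⟨a, b, rfl⟩ := AddSubgroup.mem_closure_pair.1 (hle (AddSubgroup.subset_closure
    (show w ∈ ({w, w'} : Set ℂ) by simp)))
  obtain ⟨c, d, rfl⟩ := AddSubgroup.mem_closure_pair.1 (hle (AddSubgroup.subset_closure
    (show w' ∈ ({_, w'} : Set ℂ) by simp)))
  rw [pArea_zsmul_add_zsmul] at hB ⊢
  have hdet : (0 : ℝ) < (a * d - b * c : ℤ) := pos_of_mul_pos_left hB hA
  have hdet_one : (1 : ℝ) ≤ (a * d - b * c : ℤ) := by exact_mod_cast (Int.cast_pos.1 hdet)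
  nlinarith

lemma AddSubgroup.closure_pair_add_zsmul {G : Type*} [AddCommGroup G] (v v' : G) (n : ℤ) :
    AddSubgroup.closure {v, v' + n • v} = AddSubgroup.closure ({v, v'} : Set G) := by
  apply le_antisymm <;> rw [AddSubgroup.closure_le] <;> rintro z (rfl | rfl)
  · exact AddSubgroup.subset_closure (by simp)
  · exact AddSubgroup.mem_closure_pair.2 ⟨n, 1, by rw [one_smul, add_comm]⟩
  · exact AddSubgroup.subset_closure (by simp)
  · exact AddSubgroup.mem_closure_pair.2 ⟨-n, 1, by rw [one_smul, neg_smul]; abel⟩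

lemma exists_sq_norm_add_intCast_le (z : ℂ) : ∃ n : ℤ, ‖z + n‖ ^ 2 ≤ 1 / 4 + z.im ^ 2 := by
  refine ⟨-round z.re, ?_⟩
  have hre : (z.re - round z.re) ^ 2 ≤ 1 / 4 := by
    have hdist := abs_sub_round z.re
    rw [← sq_abs]
    nlinarith [abs_nonneg (z.re - round z.re)]
  rw [Complex.sq_norm, normSq_apply]
  push_cast
  simp only [add_re, add_im, neg_re, neg_im, intCast_re, intCast_im, neg_zero, add_zero]
  nlinarith

lemma exists_sq_norm_add_zsmul_le {v : ℂ} (hv : v ≠ 0) (x : ℂ) :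
    ∃ n : ℤ, ‖x + n • v‖ ^ 2 ≤ (‖v‖ / 2) ^ 2 + (pArea v x / ‖v‖) ^ 2 := by
  obtain ⟨n, hn⟩ := exists_sq_norm_add_intCast_le (x / v)
  refine ⟨n, ?_⟩
  have hxv : x + n • v = v * (x / v + n) := by
    rw [zsmul_eq_mul, mul_add, mul_div_cancel₀ _ hv, mul_comm]
  rw [im_div_eq_pArea_div_normSq, ← Complex.sq_norm] at hn
  calc ‖x + n • v‖ ^ 2 = ‖v‖ ^ 2 * ‖x / v + n‖ ^ 2 := by rw [hxv, norm_mul, mul_pow]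
    _ ≤ ‖v‖ ^ 2 * (1 / 4 + (pArea v x / ‖v‖ ^ 2) ^ 2) := by gcongr
    _ = (‖v‖ / 2) ^ 2 + (pArea v x / ‖v‖) ^ 2 := by field_simp; ring

namespace IsOrientedBasis

variable {L : AddSubgroup ℂ} {v v' w w' : ℂ}

lemma pArea_pos (h : IsOrientedBasis L v v') : 0 < pArea v v' := by
  have h_im := h.1
  rw [im_div_eq_pArea_div_normSq] at h_im
  exact lt_of_not_ge fun hle => h_im.not_ge (div_nonpos_of_nonpos_of_nonneg hle (normSq_nonneg v))

lemma pArea_eq (h : IsOrientedBasis L v v') (h' : IsOrientedBasis L w w') :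
    pArea v v' = pArea w w' :=
  le_antisymm
    (pArea_le_pArea_of_closure_le (h'.2.trans h.2.symm).le h.pArea_pos.le h'.pArea_pos)
    (pArea_le_pArea_of_closure_le (h.2.trans h'.2.symm).le h'.pArea_pos.le h.pArea_pos)

lemma add_zsmul (h : IsOrientedBasis L v v') (n : ℤ) : IsOrientedBasis L v (v' + n • v) := by
  refine ⟨?_, (AddSubgroup.closure_pair_add_zsmul v v' n).trans h.2⟩
  have hv : v ≠ 0 := by rintro rfl; simpa using h.1
  rw [zsmul_eq_mul, add_div, mul_div_cancel_right₀ _ hv, add_im, intCast_im, add_zero]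
  exact h.1

end IsOrientedBasis

lemma IsMinCompletion.sq_norm_le {L : AddSubgroup ℂ} {v v' : ℂ} (h : IsMinCompletion L v v') :
    ‖v'‖ ^ 2 ≤ (‖v‖ / 2) ^ 2 + (pArea v v' / ‖v‖) ^ 2 := by
  have hv : v ≠ 0 := by rintro rfl; simpa using h.1.1
  obtain ⟨n, hn⟩ := exists_sq_norm_add_zsmul_le hv v'
  have hpArea : pArea v (v' + n • v) = pArea v v' := by
    simpa [add_comm] using pArea_zsmul_add_zsmul 1 0 n 1 v v'
  exact (pow_le_pow_left₀ (norm_nonneg _) (h.2 _ (h.1.add_zsmul n)) 2).trans (hpArea ▸ hn)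

/-- for a minimal positive completion `v'` of `v`, the angle `α`
between `v` and `v'` (with `sin α = Im(conj v · v')/(|v||v'|)`) satisfies
`sin α ≥ area(L)/(((|v|/2)² + (area(L)/|v|)²)^{1/2} · |v|)`. -/
theorem sin_angle_lower_bound (L : AddSubgroup ℂ) (w w' : ℂ)
    (hL : IsOrientedBasis L w w') (v v' : ℂ)
    (hmin : IsMinCompletion L v v') :
    pArea w w' /
        (Real.sqrt ((‖v‖ / 2) ^ 2 + (pArea w w' / ‖v‖) ^ 2) *
          ‖v‖) ≤
      pArea v v' / (‖v‖ * ‖v'‖) := by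
  have hA := hmin.1.pArea_pos
  rw [← hmin.1.pArea_eq hL]
  have hvv' : 0 < ‖v‖ * ‖v'‖ := by
    refine mul_pos (norm_pos_iff.2 ?_) (norm_pos_iff.2 ?_) <;> rintro rfl <;> simp [pArea] at hA
  refine div_le_div_of_nonneg_left hA.le hvv' ?_
  rw [mul_comm]
  exact mul_le_mul_of_nonneg_right (Real.le_sqrt_of_sq_le hmin.sq_norm_le) (norm_nonneg v)
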